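/- Let f be an algebraic power series over k in x = (x', xₙ) that is xₙ-regular of order d (i.e., f(0,…,0,xₙ) is a nonzero series of order d in xₙ). If α ∈ an algebraic closure of k((x')) satisfies ord_{x'}(α) > 0 and f(x', α) = 0, then α is algebraic over k(x') with H(α) ≤ H(f) and Deg(α) ≤ H(f). -/

import Mathlib

open Polynomial MvPowerSeries

noncomputable section

variable {k : Type*} [Field k] {σ : Type*}

/-- Evaluation of a polynomial `P ∈ k[x][T]` at a power series `f ∈ k⟦x⟧`. -/
def pEval (P : Polynomial (MvPolynomial σ k)) (f : MvPowerSeries σ k) :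
    MvPowerSeries σ k :=
  (P.map MvPolynomial.coeToMvPowerSeries.ringHom).eval f

/-- `P` is (a) minimal polynomial of the power series `f`. -/
def IsMinPolyOf (P : Polynomial (MvPolynomial σ k)) (f : MvPowerSeries σ k) : Prop :=
  P ≠ 0 ∧ pEval P f = 0 ∧ ∀ Q : Polynomial (MvPolynomial σ k), pEval Q f = 0 → P ∣ Q

/-- `P ∈ k[x'][T]` is (a) minimal polynomial of an element `α` of a field extension of
`k(x')`. -/
def IsMinPolyE {L : Type*} [Field L] [Algebra (MvPolynomial σ k) L]
    (P : Polynomial (MvPolynomial σ k)) (α : L) : Prop :=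
  P ≠ 0 ∧ Polynomial.aeval α P = 0 ∧
    ∀ Q : Polynomial (MvPolynomial σ k), Polynomial.aeval α Q = 0 → P ∣ Q

/-- The height of `P`: the maximum of the total degrees of its coefficients. -/
def heightP (P : Polynomial (MvPolynomial σ k)) : ℕ :=
  (Finset.range (P.natDegree + 1)).sup fun i => (P.coeff i).totalDegree

/-- A polynomial in the variables `x' = (x₁, …, x_{n-1})`, viewed as a power series in
`(xₙ, x₁, …, x_{n-1})` (the distinguished variable `xₙ` is the variable of index `0`). -/
def polyIncl {n : ℕ} (p : MvPolynomial (Fin n) k) : MvPowerSeries (Fin (n + 1)) k :=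
  MvPolynomial.coeToMvPowerSeries.ringHom (MvPolynomial.rename Fin.succ p)

/-! Substituting `T = 0` in `P(x, f) = 0` and applying `φ` gives `P(x', α, 0) = 0`, and
`P(x, 0) ≠ 0` because `f ≠ 0` and `P` is minimal. So `α` is algebraic over the GCD domain
`k[x']`, and its annihilator in `k[x'][T]` is generated by a primitive polynomial `Q`, which
divides `P(x', T, 0)`. Since total degree is additive on `k[x', T]`, both the height and the
`T`-degree of `Q` are bounded by the total degree of `P(x, 0)`, hence by `H(P)`. -/

open scoped nonZeroDivisors

section GCDDomain

variable {R : Type*} [CommRing R] [IsDomain R] [IsGCDMonoid R]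

theorem Polynomial.exists_isPrimitive_associated_map {K : Type*} [Field K] [Algebra R K]
    [IsFractionRing R K] {p : K[X]} (hp : p ≠ 0) :
    ∃ Q : R[X], Q.IsPrimitive ∧ Associated (Q.map (algebraMap R K)) p := by
  let : NormalizedGCDMonoid R := Nonempty.some inferInstance
  set N := IsLocalization.integerNormalization R⁰ p
  obtain ⟨b, hb, hNb⟩ := IsLocalization.integerNormalization_spec R⁰ p
  have hN : N ≠ 0 := IsFractionRing.integerNormalization_eq_zero_iff.not.mpr hp
  have hunit {r : R} (hr : r ≠ 0) : IsUnit (C (algebraMap R K r)) :=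
    isUnit_C.mpr <| isUnit_iff_ne_zero.mpr <|
      (map_ne_zero_iff _ (IsFractionRing.injective R K)).mpr hr
  refine ⟨N.primPart, N.isPrimitive_primPart, ?_⟩
  have hfactor : C (algebraMap R K N.content) * N.primPart.map (algebraMap R K) =
      C (algebraMap R K b) * p := by
    rw [← map_C, ← Polynomial.map_mul, ← N.eq_C_content_mul_primPart, hNb, Algebra.smul_def,
      algebraMap_apply]
  exact (associated_unit_mul_left _ _ (hunit (content_eq_zero_iff.not.mpr hN))).symm.trans
    (hfactor ▸ associated_unit_mul_left _ _ (hunit (nonZeroDivisors.ne_zero hb)))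

/-- The generator is `minpoly` over the fraction field, made primitive; it divides every
annihilator by Gauss's lemma. -/
theorem IsAlgebraic.exists_minimal_annihilator {L : Type*} [Field L] [Algebra R L]
    [FaithfulSMul R L] {α : L} (hα : IsAlgebraic R α) :
    ∃ Q : R[X], Q ≠ 0 ∧ aeval α Q = 0 ∧ ∀ q : R[X], aeval α q = 0 → Q ∣ q := by
  let := FractionRing.liftAlgebra R L
  set K := FractionRing R
  have hint : IsIntegral K α := ((IsFractionRing.isAlgebraic_iff R K L).mp hα).isIntegral
  obtain ⟨Q, hQ, hQμ⟩ := exists_isPrimitive_associated_map (R := R) (minpoly.ne_zero hint)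
  refine ⟨Q, hQ.ne_zero, ?_, fun q hq => hQ.dvd_of_fraction_map_dvd_fraction_map (K := K) ?_⟩
  · rw [← aeval_map_algebraMap K]
    exact aeval_eq_zero_of_dvd_aeval_eq_zero hQμ.symm.dvd (minpoly.aeval K α)
  · exact hQμ.dvd.trans (minpoly.dvd K α (by rwa [aeval_map_algebraMap]))

end GCDDomain

theorem MvPolynomial.aeval_finSuccEquiv {R A : Type*} [CommSemiring R] [CommSemiring A] {n : ℕ}
    [Algebra (MvPolynomial (Fin n) R) A] (ψ : MvPolynomial (Fin (n + 1)) R →+* A) {a : A}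
    (h0 : ψ (X 0) = a) (hsucc : ∀ p, ψ (rename Fin.succ p) = algebraMap _ A p)
    (g : MvPolynomial (Fin (n + 1)) R) : Polynomial.aeval a (finSuccEquiv R n g) = ψ g := by
  suffices (Polynomial.aeval a).toRingHom.comp (finSuccEquiv R n).toRingHom = ψ from
    DFunLike.congr_fun this g
  refine ringHom_ext (fun r => ?_) (Fin.cases ?_ fun j => ?_)
  · simpa [finSuccEquiv_apply] using (hsucc (C r)).symm
  · simp [h0, finSuccEquiv_X_zero]
  · simpa [finSuccEquiv_X_succ] using (hsucc (X j)).symm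

theorem IsMinPolyOf.coeff_zero_ne_zero {P : Polynomial (MvPolynomial σ k)}
    {f : MvPowerSeries σ k} (hP : IsMinPolyOf P f) (hf : f ≠ 0) : P.coeff 0 ≠ 0 := by
  obtain ⟨hP0, hPf, hPmin⟩ := hP
  intro h0
  obtain ⟨P', rfl⟩ := X_dvd_iff.mpr h0
  have hP' : P' ≠ 0 := right_ne_zero_of_mul hP0
  have hP'f : pEval P' f = 0 := by simpa [pEval, hf] using hPf
  have : Polynomial.X * P' ∣ 1 * P' := by simpa using hPmin P' hP'f
  exact not_isUnit_X (isUnit_of_dvd_one ((mul_dvd_mul_iff_right hP').mp this))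

theorem map_pEval {L : Type*} [CommRing L] (φ : MvPowerSeries σ k →+* L)
    (P : Polynomial (MvPolynomial σ k)) (f : MvPowerSeries σ k) :
    φ (pEval P f) = (P.map (φ.comp MvPolynomial.coeToMvPowerSeries.ringHom)).eval (φ f) := by
  rw [pEval, eval_map, eval_map, hom_eval₂]

theorem map_coeff_zero_eq_zero_of_pEval_eq_zero {L : Type*} [CommRing L]
    (φ : MvPowerSeries σ k →+* L) {P : Polynomial (MvPolynomial σ k)} {f : MvPowerSeries σ k}
    (hP : pEval P f = 0) (hf : φ f = 0) : φ (P.coeff 0 : MvPowerSeries σ k) = 0 := by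
  simpa [hf, coeff_zero_eq_eval_zero] using (map_pEval φ P f).symm.trans (congrArg φ hP)

theorem totalDegree_coeff_le_heightP (P : Polynomial (MvPolynomial σ k)) (i : ℕ) :
    (P.coeff i).totalDegree ≤ heightP P := by
  by_cases hi : i ≤ P.natDegree
  · exact Finset.le_sup (f := fun i => (P.coeff i).totalDegree) (by simp; omega)
  · simp [coeff_eq_zero_of_natDegree_lt (not_le.mp hi)]

theorem heightP_le_totalDegree_finSuccEquiv_symm {n : ℕ}
    (Q : Polynomial (MvPolynomial (Fin n) k)) :
    heightP Q ≤ ((MvPolynomial.finSuccEquiv k n).symm Q).totalDegree := by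
  refine Finset.sup_le fun i _ => ?_
  by_cases h : Q.coeff i = 0
  · simp [h]
  · have := MvPolynomial.totalDegree_coeff_finSuccEquiv_add_le
      ((MvPolynomial.finSuccEquiv k n).symm Q) i (by simpa using h)
    simp only [AlgEquiv.apply_symm_apply] at this
    omega

theorem natDegree_le_totalDegree_finSuccEquiv_symm {n : ℕ}
    (Q : Polynomial (MvPolynomial (Fin n) k)) :
    Q.natDegree ≤ ((MvPolynomial.finSuccEquiv k n).symm Q).totalDegree := by
  have := MvPolynomial.natDegree_finSuccEquiv ((MvPolynomial.finSuccEquiv k n).symm Q)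
  rw [AlgEquiv.apply_symm_apply] at this
  exact this ▸ MvPolynomial.degreeOf_le_totalDegree _ 0

/-- The root `α` in an algebraic closure `L` of `k((x'))` is given through the substitution
homomorphism `φ : k⟦x⟧ → L` fixing `k[x']` and sending `xₙ` to `α`. -/
theorem root_algebraic_height_le {n : ℕ} {L : Type*} [Field L]
    [Algebra (MvPolynomial (Fin n) k) L]
    (hinj : Function.Injective (algebraMap (MvPolynomial (Fin n) k) L))
    (f : MvPowerSeries (Fin (n + 1)) k)
    (hreg : ∃ m : ℕ, MvPowerSeries.coeff (Finsupp.single 0 m) f ≠ 0)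
    (P : Polynomial (MvPolynomial (Fin (n + 1)) k)) (hP : IsMinPolyOf P f)
    (φ : MvPowerSeries (Fin (n + 1)) k →+* L)
    (hφ : ∀ p : MvPolynomial (Fin n) k,
      φ (polyIncl p) = algebraMap (MvPolynomial (Fin n) k) L p)
    (α : L) (hα : φ (MvPowerSeries.X 0) = α) (hroot : φ f = 0) :
    ∃ Q : Polynomial (MvPolynomial (Fin n) k), IsMinPolyE Q α ∧
      heightP Q ≤ heightP P ∧ Q.natDegree ≤ heightP P := by
  have hf : f ≠ 0 := by
    obtain ⟨m, hm⟩ := hreg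
    rintro rfl
    exact hm (map_zero _)
  have : FaithfulSMul (MvPolynomial (Fin n) k) L :=
    (faithfulSMul_iff_algebraMap_injective _ L).mpr hinj
  set c := MvPolynomial.finSuccEquiv k n (P.coeff 0)
  have hc : c ≠ 0 := by simpa [c] using hP.coeff_zero_ne_zero hf
  have hcα : aeval α c = 0 := by
    rw [MvPolynomial.aeval_finSuccEquiv (φ.comp MvPolynomial.coeToMvPowerSeries.ringHom)
      (by simpa using hα) hφ]
    exact map_coeff_zero_eq_zero_of_pEval_eq_zero φ hP.2.1 hroot
  obtain ⟨Q, hQ, hQα, hQmin⟩ := IsAlgebraic.exists_minimal_annihilator ⟨c, hc, hcα⟩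
  have hQdeg : ((MvPolynomial.finSuccEquiv k n).symm Q).totalDegree ≤ heightP P :=
    calc _ ≤ ((MvPolynomial.finSuccEquiv k n).symm c).totalDegree :=
          MvPolynomial.totalDegree_le_of_dvd_of_isDomain (map_dvd _ (hQmin c hcα)) (by simpa)
      _ = (P.coeff 0).totalDegree := by simp [c]
      _ ≤ heightP P := totalDegree_coeff_le_heightP P 0
  exact ⟨Q, ⟨hQ, hQα, hQmin⟩, (heightP_le_totalDegree_finSuccEquiv_symm Q).trans hQdeg,
    (natDegree_le_totalDegree_finSuccEquiv_symm Q).trans hQdeg⟩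

end
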